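/- For positive data a_{tτ} = p^τ·q^t > 0, the strict system λ_t a_{tt} < λ_τ a_{tτ} for all t ≠ τ (λ_t > 0) is consistent if and only if for every cyclic sequence t(1),…,t(k) with k ≥ 2 of distinct indices one has a_{t(2)t(1)} a_{t(3)t(2)} ⋯ a_{t(1)t(k)} > a_{t(1)t(1)} ⋯ a_{t(k)t(k)}. -/

import Mathlib

/-!
Taking logarithms, the system asks for a potential `μ` with `μ t - μ τ < w t τ` for `t ≠ τ`,
where `w t τ = log a_{tτ} - log a_{tt}`, and the cycle condition says that `w` is positive on
simple cycles. Necessity is telescoping along the cycle. For sufficiency, give self-loops weight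
`1`; then every closed walk splits at a repeated vertex into shorter closed walks, so all closed
walks have positive weight. Now eliminate the last vertex: replacing `w σ τ` by
`min (w σ τ) (w σ last + w last τ)` keeps closed walks positive, since each reduced walk lifts to
an original one of the same weight. By induction the reduced graph has a potential, and it extends
to the last vertex by any value strictly between `max_σ (μ σ - w σ last)` and
`min_τ (μ τ + w last τ)`, which are in order since `μ σ - μ τ < min (…) ≤ w σ last + w last τ`.
-/

open Finset

/-- Cyclic successor on `Fin k`. -/
def cyc {k : ℕ} (i : Fin k) : Fin k := ⟨(i.val + 1) % k, Nat.mod_lt _ i.pos⟩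

theorem cyc_eq_finRotate (k : ℕ) : (cyc : Fin k → Fin k) = finRotate k := by
  funext i
  have := i.neZero
  ext
  simp [cyc, finRotate_apply, Fin.val_add]

theorem cyc_ne {k : ℕ} (hk : 2 ≤ k) (i : Fin k) : cyc i ≠ i := by
  intro h
  have hval : (i.val + 1) % k = i.val := congrArg Fin.val h
  rcases Nat.lt_or_ge (i.val + 1) k with hlt | hge
  · rw [Nat.mod_eq_of_lt hlt] at hval; omega
  · rw [show i.val + 1 = k by omega, Nat.mod_self] at hval; omega

theorem List.exists_eq_append_cons_append_cons_of_not_nodup {α : Type*} :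
    ∀ {l : List α}, ¬ l.Nodup → ∃ x u y z, l = x ++ u :: y ++ u :: z
  | [], h => absurd List.nodup_nil h
  | a :: l, h => by
    rw [List.nodup_cons, not_and_or, not_not] at h
    rcases h with ha | hl
    · obtain ⟨y, z, rfl⟩ := List.append_of_mem ha
      exact ⟨[], a, y, z, rfl⟩
    · obtain ⟨x, u, y, z, rfl⟩ := exists_eq_append_cons_append_cons_of_not_nodup hl
      exact ⟨a :: x, u, y, z, rfl⟩

section Walks

variable {V : Type*} (w : V → V → ℝ)

-- The walk `u, l₀, l₁, …`; the closed walk `v, c, v` is `pathWeight w v (c ++ [v])`.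
def pathWeight : V → List V → ℝ
  | _, [] => 0
  | u, v :: l => w v u + pathWeight v l

def cycleWeight {k : ℕ} (t : Fin k → V) : ℝ := ∑ i, w (t (cyc i)) (t i)

theorem pathWeight_append_cons (u : V) (A : List V) (v : V) (B : List V) :
    pathWeight w u (A ++ v :: B) = pathWeight w u (A ++ [v]) + pathWeight w v B := by
  induction A generalizing u with
  | nil => simp [pathWeight]
  | cons a A ih => simp [pathWeight, ih, add_assoc]

theorem pathWeight_eq_sum_zipWith (u : V) (l : List V) :
    pathWeight w u l = (List.zipWith w l (u :: l)).sum := by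
  induction l generalizing u with
  | nil => rfl
  | cons v l ih => simp [pathWeight, ih]

theorem pathWeight_append_singleton_eq_cycleWeight (v : V) (c : List V) :
    pathWeight w v (c ++ [v]) = cycleWeight w (v :: c).get := by
  rw [pathWeight_eq_sum_zipWith, cycleWeight, ← List.sum_ofFn]
  congr 1
  have hrot : c ++ [v] = (v :: c).rotate 1 := by simp
  refine List.ext_getElem (by simp) fun i h₁ h₂ => ?_
  have hi : i < (v :: c).length := by simpa using h₂
  rw [List.getElem_zipWith, List.getElem_ofFn, List.getElem_of_eq hrot, List.getElem_rotate]
  simp only [← List.cons_append, List.getElem_append_left hi]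
  rfl

theorem pathWeight_closed_pos_of_nodup
    (h : ∀ v c, (v :: c).Nodup → 0 < pathWeight w v (c ++ [v])) (v : V) (c : List V) :
    0 < pathWeight w v (c ++ [v]) := by
  by_cases hnd : (v :: c).Nodup
  · exact h v c hnd
  rw [List.nodup_cons, not_and_or, not_not] at hnd
  rcases hnd with hv | hc
  · obtain ⟨x, y, rfl⟩ := List.append_of_mem hv
    have hx := pathWeight_closed_pos_of_nodup h v x
    have hy := pathWeight_closed_pos_of_nodup h v y
    rw [List.append_assoc, List.cons_append, pathWeight_append_cons]
    exact add_pos hx hy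
  · obtain ⟨x, u, y, z, rfl⟩ := List.exists_eq_append_cons_append_cons_of_not_nodup hc
    have hinner := pathWeight_closed_pos_of_nodup h u y
    have houter := pathWeight_closed_pos_of_nodup h v (x ++ u :: z)
    have hsplit : pathWeight w v (x ++ u :: y ++ u :: z ++ [v]) =
        pathWeight w v (x ++ u :: z ++ [v]) + pathWeight w u (y ++ [u]) := by
      simp only [List.append_assoc, List.cons_append]
      rw [pathWeight_append_cons w v x u (y ++ u :: (z ++ [v])),
        pathWeight_append_cons w u y u (z ++ [v]), pathWeight_append_cons w v x u (z ++ [v])]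
      ring
    rw [hsplit]
    exact add_pos houter hinner
termination_by c.length
decreasing_by all_goals subst_vars; simp only [List.length_append, List.length_cons]; omega

end Walks

section Elimination

variable {n : ℕ} (w : Fin (n + 1) → Fin (n + 1) → ℝ)

def eliminateLast (σ τ : Fin n) : ℝ :=
  min (w σ.castSucc τ.castSucc) (w σ.castSucc (Fin.last n) + w (Fin.last n) τ.castSucc)

-- The vertices inserted when a step `u → v` of the reduced graph is lifted to `Fin (n + 1)`.
noncomputable def detour (u v : Fin n) : List (Fin (n + 1)) :=
  if w v.castSucc u.castSucc ≤ w v.castSucc (Fin.last n) + w (Fin.last n) u.castSucc then []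
  else [Fin.last n]

noncomputable def liftWalk : Fin n → List (Fin n) → List (Fin (n + 1))
  | _, [] => []
  | u, v :: l => detour w u v ++ v.castSucc :: liftWalk v l

theorem pathWeight_detour (u v : Fin n) :
    pathWeight w u.castSucc (detour w u v ++ [v.castSucc]) = eliminateLast w v u := by
  unfold detour eliminateLast
  split_ifs with h
  · simp [pathWeight, min_eq_left h]
  · simp [pathWeight, min_eq_right (not_le.1 h).le, add_comm]

theorem pathWeight_liftWalk (u : Fin n) (l : List (Fin n)) :
    pathWeight w u.castSucc (liftWalk w u l) = pathWeight (eliminateLast w) u l := by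
  induction l generalizing u with
  | nil => rfl
  | cons v l ih => rw [liftWalk, pathWeight_append_cons, pathWeight_detour, ih, pathWeight]

theorem liftWalk_append_singleton (u : Fin n) (l : List (Fin n)) (v : Fin n) :
    ∃ c, liftWalk w u (l ++ [v]) = c ++ [v.castSucc] := by
  induction l generalizing u with
  | nil => exact ⟨detour w u v, by simp [liftWalk]⟩
  | cons a l ih =>
    obtain ⟨c, hc⟩ := ih a
    exact ⟨detour w u a ++ a.castSucc :: c, by simp [liftWalk, hc]⟩

theorem pathWeight_closed_eliminateLast_pos (h : ∀ v c, 0 < pathWeight w v (c ++ [v]))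
    (v : Fin n) (c : List (Fin n)) : 0 < pathWeight (eliminateLast w) v (c ++ [v]) := by
  obtain ⟨c', hc'⟩ := liftWalk_append_singleton w v c v
  rw [← pathWeight_liftWalk, hc']
  exact h _ _

end Elimination

theorem exists_between_of_finite {ι : Type*} [Finite ι] {f g : ι → ℝ} (h : ∀ i j, f i < g j) :
    ∃ c, (∀ i, f i < c) ∧ ∀ j, c < g j := by
  cases isEmpty_or_nonempty ι
  · exact ⟨0, isEmptyElim, isEmptyElim⟩
  obtain ⟨i₀, hi₀⟩ := Finite.exists_max f
  obtain ⟨j₀, hj₀⟩ := Finite.exists_min g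
  obtain ⟨c, hfc, hcg⟩ := exists_between (h i₀ j₀)
  exact ⟨c, fun i => (hi₀ i).trans_lt hfc, fun j => hcg.trans_le (hj₀ j)⟩

theorem exists_potential_of_pathWeight_closed_pos :
    ∀ {n : ℕ} (w : Fin n → Fin n → ℝ), (∀ v c, 0 < pathWeight w v (c ++ [v])) →
      ∃ μ : Fin n → ℝ, ∀ t τ, μ t - μ τ < w t τ
  | 0, _, _ => ⟨finZeroElim, finZeroElim⟩
  | n + 1, w, h => by
    obtain ⟨μ, hμ⟩ := exists_potential_of_pathWeight_closed_pos (eliminateLast w)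
      (pathWeight_closed_eliminateLast_pos w h)
    obtain ⟨c, hc_left, hc_right⟩ := exists_between_of_finite
      (f := fun σ => μ σ - w σ.castSucc (Fin.last n))
      (g := fun τ => μ τ + w (Fin.last n) τ.castSucc) fun σ τ => by
        have := (hμ σ τ).trans_le (min_le_right _ _)
        linarith
    refine ⟨Fin.snoc μ c, fun t τ => ?_⟩
    induction t using Fin.lastCases with
    | last =>
      induction τ using Fin.lastCases with
      | last => simpa [pathWeight] using h (Fin.last n) []
      | cast τ =>
        simp only [Fin.snoc_last, Fin.snoc_castSucc]
        linarith [hc_right τ]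
    | cast σ =>
      induction τ using Fin.lastCases with
      | last =>
        simp only [Fin.snoc_last, Fin.snoc_castSucc]
        linarith [hc_left σ]
      | cast τ => simpa using (hμ σ τ).trans_le (min_le_left _ _)

section Cycles

variable {V : Type*}

theorem cycleWeight_pos_of_potential {w : V → V → ℝ} {μ : V → ℝ}
    (hμ : ∀ x y, x ≠ y → μ x - μ y < w x y) {k : ℕ} (hk : 2 ≤ k) {t : Fin k → V}
    (ht : Function.Injective t) : 0 < cycleWeight w t := by
  have : NeZero k := ⟨by omega⟩
  calc 0 = ∑ i, (μ (t (cyc i)) - μ (t i)) := by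
        rw [sum_sub_distrib, cyc_eq_finRotate, Equiv.sum_comp (finRotate k) fun i => μ (t i),
          sub_self]
    _ < cycleWeight w t :=
        sum_lt_sum_of_nonempty univ_nonempty fun i _ => hμ _ _ (ht.ne (cyc_ne hk i))

theorem cycleWeight_congr_of_injective {w w' : V → V → ℝ} (h : ∀ x y, x ≠ y → w x y = w' x y)
    {k : ℕ} (hk : 2 ≤ k) {t : Fin k → V} (ht : Function.Injective t) :
    cycleWeight w t = cycleWeight w' t :=
  sum_congr rfl fun i _ => h _ _ (ht.ne (cyc_ne hk i))

end Cycles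

theorem exists_potential_iff_cycleWeight_pos {n : ℕ} (w : Fin n → Fin n → ℝ) :
    (∃ μ : Fin n → ℝ, ∀ t τ, t ≠ τ → μ t - μ τ < w t τ) ↔
      ∀ k, 2 ≤ k → ∀ t : Fin k → Fin n, Function.Injective t → 0 < cycleWeight w t := by
  refine ⟨fun ⟨μ, hμ⟩ k hk t ht => cycleWeight_pos_of_potential hμ hk ht, fun H => ?_⟩
  set w' : Fin n → Fin n → ℝ := fun t τ => if t = τ then 1 else w t τ
  have hw' : ∀ t τ, t ≠ τ → w t τ = w' t τ := fun t τ h => (if_neg h).symm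
  obtain ⟨μ, hμ⟩ := exists_potential_of_pathWeight_closed_pos w' <|
    pathWeight_closed_pos_of_nodup w' fun v c hnd => by
      rcases c with _ | ⟨u, c⟩
      · simp [pathWeight, w']
      rw [pathWeight_append_singleton_eq_cycleWeight,
        ← cycleWeight_congr_of_injective hw' (by simp) (List.nodup_iff_injective_get.1 hnd)]
      exact H _ (by simp) _ (List.nodup_iff_injective_get.1 hnd)
  exact ⟨μ, fun t τ h => hw' t τ h ▸ hμ t τ⟩

theorem mul_lt_mul_iff_log_sub_lt_log_sub {x y p q : ℝ} (hx : 0 < x) (hy : 0 < y) (hp : 0 < p)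
    (hq : 0 < q) : x * p < y * q ↔ Real.log x - Real.log y < Real.log q - Real.log p := by
  rw [← Real.log_lt_log_iff (mul_pos hx hp) (mul_pos hy hq), Real.log_mul hx.ne' hp.ne',
    Real.log_mul hy.ne' hq.ne']
  constructor <;> intro h <;> linarith

theorem exists_pos_scaling_iff_exists_potential {ι : Type*} (a : ι → ι → ℝ)
    (ha : ∀ t τ, 0 < a t τ) :
    (∃ l : ι → ℝ, (∀ t, 0 < l t) ∧ ∀ t τ, t ≠ τ → l t * a t t < l τ * a t τ) ↔
      ∃ μ : ι → ℝ, ∀ t τ, t ≠ τ → μ t - μ τ < Real.log (a t τ) - Real.log (a t t) := by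
  constructor
  · rintro ⟨l, hl, h⟩
    exact ⟨fun t => Real.log (l t), fun t τ hne =>
      (mul_lt_mul_iff_log_sub_lt_log_sub (hl t) (hl τ) (ha t t) (ha t τ)).1 (h t τ hne)⟩
  · rintro ⟨μ, hμ⟩
    refine ⟨fun t => Real.exp (μ t), fun t => Real.exp_pos _, fun t τ hne => ?_⟩
    rw [mul_lt_mul_iff_log_sub_lt_log_sub (Real.exp_pos _) (Real.exp_pos _) (ha t t) (ha t τ),
      Real.log_exp, Real.log_exp]
    exact hμ t τ hne

theorem prod_diag_lt_prod_cyc_iff {V : Type*} {a : V → V → ℝ} (ha : ∀ t τ, 0 < a t τ) {k : ℕ}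
    (t : Fin k → V) :
    ∏ i, a (t i) (t i) < ∏ i, a (t (cyc i)) (t i) ↔
      0 < cycleWeight (fun x y => Real.log (a x y) - Real.log (a x x)) t := by
  have hdiag : ∑ i, Real.log (a (t (cyc i)) (t (cyc i))) = ∑ i, Real.log (a (t i) (t i)) := by
    rw [cyc_eq_finRotate, Equiv.sum_comp (finRotate k) fun i => Real.log (a (t i) (t i))]
  rw [cycleWeight, sum_sub_distrib, hdiag, ← Real.log_prod fun i _ => (ha _ _).ne',
    ← Real.log_prod fun i _ => (ha _ _).ne', sub_pos,
    Real.log_lt_log_iff (prod_pos fun i _ => ha _ _) (prod_pos fun i _ => ha _ _)]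

/-- Strict version of the Afriat cycle condition: for positive data `a t τ`,
the strict system `λ_t a_{tt} < λ_τ a_{tτ}` for all `t ≠ τ` (with `λ_t > 0`)
is consistent iff for every cyclic sequence of `k ≥ 2` distinct indices the
cyclic product strictly dominates the diagonal product. -/
theorem afriat_strict_cycle_condition (T : ℕ) (a : Fin T → Fin T → ℝ)
    (ha : ∀ t τ, 0 < a t τ) :
    (∃ l : Fin T → ℝ, (∀ t, 0 < l t) ∧
        ∀ t τ, t ≠ τ → l t * a t t < l τ * a t τ) ↔
    (∀ (k : ℕ), 2 ≤ k → ∀ t : Fin k → Fin T, Function.Injective t →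
      (∏ i : Fin k, a (t (cyc i)) (t i)) > (∏ i : Fin k, a (t i) (t i))) := by
  rw [exists_pos_scaling_iff_exists_potential a ha, exists_potential_iff_cycleWeight_pos]
  simp only [gt_iff_lt, prod_diag_lt_prod_cyc_iff ha]
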